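/- SBC correctness: suppose θ̃ ~ π(θ), ỹ ~ π(y|θ̃), and θ₁, …, θ_L are iid draws from the exact posterior π(θ|ỹ), with all distributions absolutely continuous. Then for any measurable function f: Θ → ℝ such that f(θ̃), f(θ₁), …, f(θ_L) are almost surely distinct, the rank r = Σ_{ℓ=1}^L 𝟙[f(θ_ℓ) < f(θ̃)] is uniformly distributed on {0, 1, …, L}. -/
import Mathlib

open MeasureTheory
open scoped ENNReal

lemma sbc_map_withDensity {α β : Type*} [MeasurableSpace α] [MeasurableSpace β]
    {F : α → β} (hF : Measurable F) (μ : Measure α) {g : β → ℝ≥0∞} (hg : Measurable g) :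
    (μ.withDensity (fun a => g (F a))).map F = (μ.map F).withDensity g := by
  ext s hs
  rw [Measure.map_apply hF hs, withDensity_apply _ (hF hs), withDensity_apply _ hs,
    setLIntegral_map hs hg hF]

lemma sbc_rank_lt {n : ℕ} {v : Fin n → ℝ} {i j : Fin n} (hij : v i < v j) :
    (∑ t, if v t < v i then 1 else 0 : ℕ) < ∑ t, if v t < v j then 1 else 0 := by
  apply Finset.sum_lt_sum
  · intro t _
    split_ifs with h1 h2
    · exact le_refl _
    · exact absurd (h1.trans hij) h2
    · exact Nat.zero_le _
    · exact le_refl _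
  · refine ⟨i, Finset.mem_univ i, ?_⟩
    simp [hij, lt_irrefl]

lemma sbc_rank_le {n : ℕ} (v : Fin (n + 1) → ℝ) (i : Fin (n + 1)) :
    (∑ t, if v t < v i then 1 else 0 : ℕ) ≤ n := by
  have h0 : (if v i < v i then 1 else 0 : ℕ) = 0 := by simp
  rw [← Finset.sum_erase (f := fun t => if v t < v i then (1:ℕ) else 0) Finset.univ h0]
  calc (∑ t ∈ Finset.univ.erase i, if v t < v i then 1 else 0 : ℕ)
      ≤ ∑ _t ∈ Finset.univ.erase i, 1 := by
        apply Finset.sum_le_sum; intro t _; split_ifs <;> simp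
    _ = n := by
        rw [Finset.sum_const, smul_eq_mul, mul_one, Finset.card_erase_of_mem (Finset.mem_univ i),
          Finset.card_univ, Fintype.card_fin]
        omega

lemma sbc_rank_existsUnique {n : ℕ} {v : Fin (n + 1) → ℝ}
    (hinj : ∀ a b, a ≠ b → v a ≠ v b) {k : ℕ} (hk : k ≤ n) :
    ∃! i : Fin (n + 1), (∑ t, if v t < v i then 1 else 0 : ℕ) = k := by
  set g : Fin (n + 1) → Fin (n + 1) :=
    fun i => ⟨∑ t, if v t < v i then 1 else 0, Nat.lt_succ_of_le (sbc_rank_le v i)⟩ with hg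
  have hginj : Function.Injective g := by
    intro a b hab
    by_contra hne
    rcases (hinj a b hne).lt_or_gt with h | h
    · exact absurd (congrArg Fin.val hab) (Nat.ne_of_lt (sbc_rank_lt h))
    · exact absurd (congrArg Fin.val hab) (Nat.ne_of_gt (sbc_rank_lt h))
  obtain ⟨i, hi⟩ := Finite.injective_iff_surjective.mp hginj ⟨k, Nat.lt_succ_of_le hk⟩
  refine ⟨i, congrArg Fin.val hi, fun j hj => hginj (Fin.ext ?_)⟩
  exact hj.trans (congrArg Fin.val hi).symm

lemma sbc_perm_invariant {Y Θ : Type*} [MeasurableSpace Y] [MeasurableSpace Θ] {n : ℕ}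
    (μY : Measure Y) (μΘ : Measure Θ) [SigmaFinite μY] [SigmaFinite μΘ]
    (D : Y × (Fin n → Θ) → ℝ≥0∞) (hD : Measurable D)
    (hDsym : ∀ (σ : Equiv.Perm (Fin n)) (p : Y × (Fin n → Θ)),
      D (p.1, fun i => p.2 (σ i)) = D p)
    (σ : Equiv.Perm (Fin n)) :
    ((μY.prod (Measure.pi fun _ : Fin n => μΘ)).withDensity D).map
        (fun p : Y × (Fin n → Θ) => (p.1, fun i => p.2 (σ i)))
      = (μY.prod (Measure.pi fun _ : Fin n => μΘ)).withDensity D := by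
  have hφmeas : Measurable fun (x : Fin n → Θ) => fun i => x (σ i) :=
    measurable_pi_iff.2 fun i => measurable_pi_apply _
  have mpσ : MeasurePreserving (fun (x : Fin n → Θ) => fun i => x (σ i))
      (Measure.pi fun _ : Fin n => μΘ) (Measure.pi fun _ : Fin n => μΘ) := by
    refine ⟨hφmeas, ?_⟩
    refine (Measure.pi_eq (μ := fun _ : Fin n => μΘ) fun s hs => ?_).symm
    rw [Measure.map_apply hφmeas (MeasurableSet.univ_pi hs)]
    have hpre : (fun (x : Fin n → Θ) => fun i => x (σ i)) ⁻¹' (Set.univ.pi s)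
        = Set.univ.pi fun j => s (σ.symm j) := by
      ext x
      simp only [Set.mem_preimage, Set.mem_univ_pi]
      exact ⟨fun h j => by simpa using h (σ.symm j), fun h i => by simpa using h (σ i)⟩
    rw [hpre, Measure.pi_pi]
    exact Equiv.prod_comp σ.symm fun j => μΘ (s j)
  have mpψ : MeasurePreserving (fun p : Y × (Fin n → Θ) => (p.1, fun i => p.2 (σ i)))
      (μY.prod (Measure.pi fun _ : Fin n => μΘ)) (μY.prod (Measure.pi fun _ : Fin n => μΘ)) :=
    (MeasurePreserving.id μY).prod mpσ
  have hDcomp : D = fun p : Y × (Fin n → Θ) => D (p.1, fun i => p.2 (σ i)) := by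
    funext p; rw [hDsym σ p]
  calc ((μY.prod (Measure.pi fun _ : Fin n => μΘ)).withDensity D).map
        (fun p : Y × (Fin n → Θ) => (p.1, fun i => p.2 (σ i)))
      = ((μY.prod (Measure.pi fun _ : Fin n => μΘ)).withDensity
          (fun p : Y × (Fin n → Θ) => D (p.1, fun i => p.2 (σ i)))).map
          (fun p : Y × (Fin n → Θ) => (p.1, fun i => p.2 (σ i))) := by rw [← hDcomp]
    _ = (((μY.prod (Measure.pi fun _ : Fin n => μΘ)).map
          (fun p : Y × (Fin n → Θ) => (p.1, fun i => p.2 (σ i))))).withDensity D :=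
        sbc_map_withDensity mpψ.measurable _ hD
    _ = (μY.prod (Measure.pi fun _ : Fin n => μΘ)).withDensity D := by rw [mpψ.map_eq]

lemma sbc_uniform {Y Θ : Type*} [MeasurableSpace Y] [MeasurableSpace Θ] {n : ℕ}
    (ρ : Measure (Y × (Fin (n + 1) → Θ))) [IsProbabilityMeasure ρ]
    (f : Θ → ℝ) (hf : Measurable f)
    (hperm : ∀ σ : Equiv.Perm (Fin (n + 1)),
      ρ.map (fun p : Y × (Fin (n + 1) → Θ) => (p.1, fun i => p.2 (σ i))) = ρ)
    (hdist : ∀ i j : Fin (n + 1), i ≠ j → ρ {p : Y × (Fin (n + 1) → Θ) | f (p.2 i) = f (p.2 j)} = 0)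
    (k : ℕ) (hk : k ≤ n) :
    ρ {p : Y × (Fin (n + 1) → Θ) | (∑ t, if f (p.2 t) < f (p.2 0) then 1 else 0 : ℕ) = k}
      = ((n : ℝ≥0∞) + 1)⁻¹ := by
  classical
  set R : Fin (n + 1) → Y × (Fin (n + 1) → Θ) → ℕ :=
    fun i p => ∑ t, if f (p.2 t) < f (p.2 i) then 1 else 0 with hR
  set E : Fin (n + 1) → Set (Y × (Fin (n + 1) → Θ)) := fun i => {p | R i p = k} with hE
  have hRmeas : ∀ i, Measurable (R i) := by
    intro i
    apply Finset.measurable_sum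
    intro t _
    refine Measurable.ite ?_ measurable_const measurable_const
    have h1 : Measurable fun a : Y × (Fin (n + 1) → Θ) => f (a.2 t) :=
      hf.comp ((measurable_pi_apply t).comp measurable_snd)
    have h2 : Measurable fun a : Y × (Fin (n + 1) → Θ) => f (a.2 i) :=
      hf.comp ((measurable_pi_apply i).comp measurable_snd)
    exact measurableSet_lt h1 h2
  have hEmeas : ∀ i, MeasurableSet (E i) := fun i => (hRmeas i) (measurableSet_singleton k)
  -- all ranks have the same probability
  have hswap : ∀ i, ρ (E i) = ρ (E 0) := by
    intro i
    have hψmeas : Measurable fun p : Y × (Fin (n + 1) → Θ) =>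
        (p.1, fun j => p.2 (Equiv.swap 0 i j)) :=
      measurable_fst.prodMk (measurable_pi_iff.2 fun j => (measurable_pi_apply _).comp measurable_snd)
    have h1 := hperm (Equiv.swap 0 i)
    have h2 : ρ (E 0) = ρ ((fun p : Y × (Fin (n + 1) → Θ) =>
        (p.1, fun j => p.2 (Equiv.swap 0 i j))) ⁻¹' (E 0)) := by
      conv_lhs => rw [← h1]
      exact Measure.map_apply hψmeas (hEmeas 0)
    have h3 : (fun p : Y × (Fin (n + 1) → Θ) =>
        (p.1, fun j => p.2 (Equiv.swap 0 i j))) ⁻¹' (E 0) = E i := by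
      ext p
      simp only [hE, hR, Set.mem_preimage, Set.mem_setOf_eq]
      have hrw : (∑ t, if f (p.2 (Equiv.swap 0 i t)) < f (p.2 (Equiv.swap 0 i 0)) then 1 else 0 : ℕ)
          = ∑ t, if f (p.2 t) < f (p.2 i) then 1 else 0 := by
        rw [Equiv.swap_apply_left]
        exact Equiv.sum_comp (Equiv.swap 0 i) fun t => if f (p.2 t) < f (p.2 i) then (1:ℕ) else 0
      rw [hrw]
    rw [h2, h3]
  -- the bad (tie) set is null
  set B : Set (Y × (Fin (n + 1) → Θ)) :=
    ⋃ (i) (j) (_ : i ≠ j), {p : Y × (Fin (n + 1) → Θ) | f (p.2 i) = f (p.2 j)} with hB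
  have hBmeas : MeasurableSet B := by
    refine MeasurableSet.iUnion fun i => MeasurableSet.iUnion fun j =>
      MeasurableSet.iUnion fun _ => ?_
    have h1 : Measurable fun a : Y × (Fin (n + 1) → Θ) => f (a.2 i) :=
      hf.comp ((measurable_pi_apply i).comp measurable_snd)
    have h2 : Measurable fun a : Y × (Fin (n + 1) → Θ) => f (a.2 j) :=
      hf.comp ((measurable_pi_apply j).comp measurable_snd)
    exact measurableSet_eq_fun h1 h2
  have hB0 : ρ B = 0 :=
    measure_iUnion_null fun i => measure_iUnion_null fun j => measure_iUnion_null fun h =>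
      hdist i j h
  have hnotB : ∀ p : Y × (Fin (n + 1) → Θ), p ∉ B →
      ∀ a b, a ≠ b → f (p.2 a) ≠ f (p.2 b) := by
    intro p hp a b hab
    intro hEq
    exact hp (Set.mem_iUnion.2 ⟨a, Set.mem_iUnion.2 ⟨b, Set.mem_iUnion.2 ⟨hab, hEq⟩⟩⟩)
  -- sum of the probabilities is 1
  have hdisj : Pairwise (Function.onFun Disjoint fun i => E i ∩ Bᶜ) := by
    intro i j hij
    rw [Function.onFun, Set.disjoint_left]
    rintro p ⟨hpi, hpB⟩ ⟨hpj, _⟩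
    obtain ⟨u, -, huniq⟩ := sbc_rank_existsUnique (hnotB p hpB) hk
    exact hij ((huniq i hpi).trans (huniq j hpj).symm)
  have hcover : (⋃ i, E i ∩ Bᶜ) = Bᶜ := by
    ext p
    simp only [Set.mem_iUnion, Set.mem_inter_iff, Set.mem_compl_iff]
    constructor
    · rintro ⟨i, -, h⟩; exact h
    · intro hp
      obtain ⟨u, hu, -⟩ := sbc_rank_existsUnique (hnotB p hp) hk
      exact ⟨u, hu, hp⟩
  have hEB : ∀ i, ρ (E i) = ρ (E i ∩ Bᶜ) := by
    intro i
    refine le_antisymm ?_ (measure_mono Set.inter_subset_left)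
    calc ρ (E i) ≤ ρ ((E i ∩ Bᶜ) ∪ B) := by
          refine measure_mono fun p hp => ?_
          by_cases hpB : p ∈ B
          · exact Or.inr hpB
          · exact Or.inl ⟨hp, hpB⟩
      _ ≤ ρ (E i ∩ Bᶜ) + ρ B := measure_union_le _ _
      _ = ρ (E i ∩ Bᶜ) := by rw [hB0, add_zero]
  have htot : ∑ i : Fin (n + 1), ρ (E i) = 1 := by
    have h1 := measure_iUnion (μ := ρ) hdisj fun i => (hEmeas i).inter hBmeas.compl
    rw [hcover, tsum_fintype] at h1
    have h2 : ρ Bᶜ = 1 := by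
      rw [measure_compl hBmeas (measure_ne_top ρ B), hB0, measure_univ, tsub_zero]
    calc ∑ i : Fin (n + 1), ρ (E i) = ∑ i : Fin (n + 1), ρ (E i ∩ Bᶜ) := by
          exact Finset.sum_congr rfl fun i _ => hEB i
      _ = ρ Bᶜ := by rw [← h1]
      _ = 1 := h2
  -- conclude
  have hmul : ((n : ℝ≥0∞) + 1) * ρ (E 0) = 1 := by
    have : ∑ i : Fin (n + 1), ρ (E i) = ∑ _i : Fin (n + 1), ρ (E 0) :=
      Finset.sum_congr rfl fun i _ => hswap i
    rw [this, Finset.sum_const, Finset.card_univ, Fintype.card_fin, nsmul_eq_mul] at htot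
    rw [show ((n : ℝ≥0∞) + 1) = ((n + 1 : ℕ) : ℝ≥0∞) from by push_cast; ring]
    exact htot
  have hne : ((n : ℝ≥0∞) + 1) ≠ 0 := by
    simp
  have hnetop : ((n : ℝ≥0∞) + 1) ≠ ⊤ :=
    ENNReal.add_ne_top.2 ⟨ENNReal.natCast_ne_top n, ENNReal.one_ne_top⟩
  have : ρ (E 0) = ((n : ℝ≥0∞) + 1)⁻¹ := by
    calc ρ (E 0) = (((n : ℝ≥0∞) + 1)⁻¹ * ((n : ℝ≥0∞) + 1)) * ρ (E 0) := by
          rw [ENNReal.inv_mul_cancel hne hnetop, one_mul]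
      _ = ((n : ℝ≥0∞) + 1)⁻¹ * (((n : ℝ≥0∞) + 1) * ρ (E 0)) := by rw [mul_assoc]
      _ = ((n : ℝ≥0∞) + 1)⁻¹ := by rw [hmul, mul_one]
  exact this

/-- SBC correctness: suppose `θ̃ ~ π(θ)`, `ỹ ~ π(y|θ̃)`, and `θ₁, …, θ_L` are iid draws
from the exact posterior `π(θ|ỹ)`; i.e. the joint law of `(θ̃, ỹ, (θ₁, …, θ_L))` has
density `π(θ̃) π(ỹ|θ̃) ∏_ℓ π(θ_ℓ|ỹ)` w.r.t. `μΘ ⊗ μY ⊗ μΘ^L`, where the posterior density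
is given by Bayes' rule. Then for any measurable `f : Θ → ℝ` whose values at the `L+1`
draws are a.s. distinct, the rank `r = Σ_ℓ 𝟙[f(θ_ℓ) < f(θ̃)]` is uniform on `{0,…,L}`. -/
theorem stmt_4 (L : ℕ) {Θ Y : Type*} [MeasurableSpace Θ] [MeasurableSpace Y]
    (μΘ : Measure Θ) (μY : Measure Y) [SigmaFinite μΘ] [SigmaFinite μY]
    (prior : Θ → ℝ≥0∞) (lik : Θ → Y → ℝ≥0∞)
    (hprior_meas : Measurable prior)
    (hlik_meas : Measurable (Function.uncurry lik))
    (hprior : ∫⁻ θ, prior θ ∂μΘ = 1)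
    (hlik : ∀ θ, ∫⁻ y, lik θ y ∂μY = 1)
    (m : Y → ℝ≥0∞) (hm : ∀ y, m y = ∫⁻ θ, lik θ y * prior θ ∂μΘ)
    (hm_pos : ∀ y, 0 < m y) (hm_fin : ∀ y, m y < ⊤)
    (post : Θ → Y → ℝ≥0∞) (hpost : ∀ θ y, post θ y = lik θ y * prior θ / m y)
    {Ω : Type*} [MeasurableSpace Ω] (P : Measure Ω) [IsProbabilityMeasure P]
    (T : Ω → Θ) (Yv : Ω → Y) (Ts : Fin L → Ω → Θ)
    (hT : Measurable T) (hY : Measurable Yv) (hTs : ∀ ℓ, Measurable (Ts ℓ))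
    (hjoint : P.map (fun ω => (T ω, Yv ω, fun ℓ : Fin L => Ts ℓ ω)) =
      (μΘ.prod (μY.prod (Measure.pi fun _ : Fin L => μΘ))).withDensity
        (fun p => prior p.1 * lik p.1 p.2.1 * ∏ ℓ : Fin L, post (p.2.2 ℓ) p.2.1))
    (f : Θ → ℝ) (hf : Measurable f)
    (hdistinct : (∀ ℓ, P {ω | f (Ts ℓ ω) = f (T ω)} = 0) ∧
      ∀ ℓ ℓ', ℓ ≠ ℓ' → P {ω | f (Ts ℓ ω) = f (Ts ℓ' ω)} = 0) :
    ∀ k : ℕ, k ≤ L →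
      P {ω | (Finset.univ.filter (fun ℓ : Fin L => f (Ts ℓ ω) < f (T ω))).card = k}
        = (L + 1 : ℝ≥0∞)⁻¹ := by
  classical
  intro k hk
  obtain ⟨hd1, hd2⟩ := hdistinct
  -- measurability of m and post
  have hm_meas : Measurable m := by
    have h1 : Measurable fun y => ∫⁻ θ, lik θ y * prior θ ∂μΘ := by
      apply Measurable.lintegral_prod_right'
        (f := fun (p : Y × Θ) => lik p.2 p.1 * prior p.2)
      exact (hlik_meas.comp (measurable_snd.prodMk measurable_fst)).mul
        (hprior_meas.comp measurable_snd)
    have : m = fun y => ∫⁻ θ, lik θ y * prior θ ∂μΘ := funext hm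
    rw [this]; exact h1
  have hpost_meas : Measurable fun p : Θ × Y => post p.1 p.2 := by
    have : (fun p : Θ × Y => post p.1 p.2)
        = fun p : Θ × Y => lik p.1 p.2 * prior p.1 / m p.2 := by
      funext p; rw [hpost]
    rw [this]
    exact (hlik_meas.mul (hprior_meas.comp measurable_fst)).div (hm_meas.comp measurable_snd)
  -- the density on the reorganized space
  set Dens : Y × (Fin (L + 1) → Θ) → ℝ≥0∞ :=
    fun p => m p.1 * ∏ i, post (p.2 i) p.1 with hDens
  have hDens_meas : Measurable Dens := by
    apply (hm_meas.comp measurable_fst).mul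
    apply Finset.measurable_prod
    intro i _
    have h1 : Measurable fun p : Y × (Fin (L + 1) → Θ) => (p.2 i, p.1) :=
      ((measurable_pi_apply i).comp measurable_snd).prodMk measurable_fst
    exact hpost_meas.comp h1
  set G : Ω → Y × (Fin (L + 1) → Θ) :=
    fun ω => (Yv ω, Fin.cons (T ω) fun ℓ => Ts ℓ ω) with hGdef
  have hG : Measurable G := by
    refine hY.prodMk (measurable_pi_iff.2 fun i => ?_)
    refine Fin.cases ?_ ?_ i
    · simpa using hT
    · intro ℓ; simpa using hTs ℓ
  -- the reorganizing map is measure preserving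
  set Fe : Θ × (Y × (Fin L → Θ)) → Y × (Fin (L + 1) → Θ) :=
    (Prod.map id (MeasurableEquiv.piFinSuccAbove (fun _ : Fin (L + 1) => Θ) 0).symm) ∘
      (MeasurableEquiv.prodAssoc : (Y × Θ) × (Fin L → Θ) ≃ᵐ Y × Θ × (Fin L → Θ)) ∘
      (Prod.map Prod.swap id) ∘
      ⇑(MeasurableEquiv.prodAssoc : (Θ × Y) × (Fin L → Θ) ≃ᵐ Θ × Y × (Fin L → Θ)).symm with hFe
  have mp1 : MeasurePreserving
      (⇑(MeasurableEquiv.prodAssoc : (Θ × Y) × (Fin L → Θ) ≃ᵐ Θ × Y × (Fin L → Θ)).symm)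
      (μΘ.prod (μY.prod (Measure.pi fun _ : Fin L => μΘ)))
      ((μΘ.prod μY).prod (Measure.pi fun _ : Fin L => μΘ)) :=
    (measurePreserving_prodAssoc μΘ μY (Measure.pi fun _ : Fin L => μΘ)).symm _
  have mp2 : MeasurePreserving
      (Prod.map (Prod.swap : Θ × Y → Y × Θ) (id : (Fin L → Θ) → Fin L → Θ))
      ((μΘ.prod μY).prod (Measure.pi fun _ : Fin L => μΘ))
      ((μY.prod μΘ).prod (Measure.pi fun _ : Fin L => μΘ)) :=
    Measure.measurePreserving_swap.prod (MeasurePreserving.id _)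
  have mp3 : MeasurePreserving
      (⇑(MeasurableEquiv.prodAssoc : (Y × Θ) × (Fin L → Θ) ≃ᵐ Y × Θ × (Fin L → Θ)))
      ((μY.prod μΘ).prod (Measure.pi fun _ : Fin L => μΘ))
      (μY.prod (μΘ.prod (Measure.pi fun _ : Fin L => μΘ))) :=
    measurePreserving_prodAssoc μY μΘ (Measure.pi fun _ : Fin L => μΘ)
  have mp4 : MeasurePreserving
      (Prod.map (id : Y → Y)
        ⇑(MeasurableEquiv.piFinSuccAbove (fun _ : Fin (L + 1) => Θ) 0).symm)
      (μY.prod (μΘ.prod (Measure.pi fun _ : Fin L => μΘ)))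
      (μY.prod (Measure.pi fun _ : Fin (L + 1) => μΘ)) :=
    (MeasurePreserving.id μY).prod
      ((measurePreserving_piFinSuccAbove (fun _ : Fin (L + 1) => μΘ) 0).symm _)
  have mpFe : MeasurePreserving Fe
      (μΘ.prod (μY.prod (Measure.pi fun _ : Fin L => μΘ)))
      (μY.prod (Measure.pi fun _ : Fin (L + 1) => μΘ)) :=
    ((mp4.comp mp3).comp mp2).comp mp1
  have hFe_eval : ∀ (θ : Θ) (y : Y) (x : Fin L → Θ), Fe (θ, (y, x)) = (y, Fin.cons θ x) := by
    intro θ y x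
    simp only [hFe, Function.comp_apply, MeasurableEquiv.prodAssoc, MeasurableEquiv.symm_mk,
      MeasurableEquiv.coe_mk, Equiv.prodAssoc_symm_apply, Equiv.prodAssoc_apply, Prod.map_apply,
      Prod.swap_prod_mk, id_eq, MeasurableEquiv.piFinSuccAbove_symm_apply]
    rw [Fin.insertNthEquiv_zero]
    rfl
  -- the law of G
  have hgmeas : Measurable (fun ω => (T ω, Yv ω, fun ℓ : Fin L => Ts ℓ ω)) :=
    hT.prodMk (hY.prodMk (measurable_pi_iff.2 hTs))
  have hcomp : G = Fe ∘ (fun ω => (T ω, Yv ω, fun ℓ : Fin L => Ts ℓ ω)) := by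
    funext ω
    simp only [hGdef, Function.comp_apply, hFe_eval]
  have hmapρ : P.map G =
      (μY.prod (Measure.pi fun _ : Fin (L + 1) => μΘ)).withDensity Dens := by
    rw [hcomp, ← Measure.map_map mpFe.measurable hgmeas, hjoint]
    have hdd : (fun p : Θ × (Y × (Fin L → Θ)) =>
        prior p.1 * lik p.1 p.2.1 * ∏ ℓ : Fin L, post (p.2.2 ℓ) p.2.1)
        = fun p => Dens (Fe p) := by
      funext p
      obtain ⟨θ, y, x⟩ := p
      rw [hFe_eval]
      simp only [hDens]
      rw [Fin.prod_univ_succ]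
      simp only [Fin.cons_zero, Fin.cons_succ]
      have hmp : m y * post θ y = prior θ * lik θ y := by
        rw [hpost, mul_comm, ENNReal.div_mul_cancel (hm_pos y).ne' (hm_fin y).ne, mul_comm]
      rw [← mul_assoc, hmp]
    rw [hdd, sbc_map_withDensity mpFe.measurable _ hDens_meas, mpFe.map_eq]
  haveI : IsProbabilityMeasure
      ((μY.prod (Measure.pi fun _ : Fin (L + 1) => μΘ)).withDensity Dens) := by
    rw [← hmapρ]
    exact Measure.isProbabilityMeasure_map hG.aemeasurable
  -- permutation invariance
  have hperm : ∀ σ : Equiv.Perm (Fin (L + 1)),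
      (((μY.prod (Measure.pi fun _ : Fin (L + 1) => μΘ)).withDensity Dens).map
        (fun p : Y × (Fin (L + 1) → Θ) => (p.1, fun i => p.2 (σ i))))
      = (μY.prod (Measure.pi fun _ : Fin (L + 1) => μΘ)).withDensity Dens := by
    intro σ
    apply sbc_perm_invariant μY μΘ Dens hDens_meas
    intro τ p
    simp only [hDens]
    congr 1
    exact Equiv.prod_comp τ fun i => post (p.2 i) p.1
  -- distinctness
  have hdist : ∀ i j : Fin (L + 1), i ≠ j →
      ((μY.prod (Measure.pi fun _ : Fin (L + 1) => μΘ)).withDensity Dens)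
        {p : Y × (Fin (L + 1) → Θ) | f (p.2 i) = f (p.2 j)} = 0 := by
    intro i j hij
    have hSmeas : MeasurableSet {p : Y × (Fin (L + 1) → Θ) | f (p.2 i) = f (p.2 j)} := by
      have h1 : Measurable fun a : Y × (Fin (L + 1) → Θ) => f (a.2 i) :=
        hf.comp ((measurable_pi_apply i).comp measurable_snd)
      have h2 : Measurable fun a : Y × (Fin (L + 1) → Θ) => f (a.2 j) :=
        hf.comp ((measurable_pi_apply j).comp measurable_snd)
      exact measurableSet_eq_fun h1 h2
    rw [← hmapρ, Measure.map_apply hG hSmeas]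
    have hpre : G ⁻¹' {p : Y × (Fin (L + 1) → Θ) | f (p.2 i) = f (p.2 j)}
        = {ω | f ((Fin.cons (T ω) (fun ℓ => Ts ℓ ω) : Fin (L + 1) → Θ) i)
            = f ((Fin.cons (T ω) (fun ℓ => Ts ℓ ω) : Fin (L + 1) → Θ) j)} := by
      rfl
    rw [hpre]
    clear hSmeas hpre
    induction i using Fin.cases with
    | zero =>
      induction j using Fin.cases with
      | zero => exact absurd rfl hij
      | succ ℓ =>
        simp only [Fin.cons_zero, Fin.cons_succ]
        have := hd1 ℓ
        have hsets : {ω | f (T ω) = f (Ts ℓ ω)} = {ω | f (Ts ℓ ω) = f (T ω)} := by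
          ext ω; exact eq_comm
        rw [hsets]
        exact this
    | succ ℓ =>
      induction j using Fin.cases with
      | zero =>
        simp only [Fin.cons_zero, Fin.cons_succ]
        exact hd1 ℓ
      | succ ℓ' =>
        simp only [Fin.cons_succ]
        exact hd2 ℓ ℓ' (fun h => hij (by rw [h]))
  -- the target event
  have hSmeas : MeasurableSet {p : Y × (Fin (L + 1) → Θ) |
      (∑ t, if f (p.2 t) < f (p.2 0) then 1 else 0 : ℕ) = k} := by
    have : Measurable fun p : Y × (Fin (L + 1) → Θ) =>
        (∑ t, if f (p.2 t) < f (p.2 0) then 1 else 0 : ℕ) := by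
      apply Finset.measurable_sum
      intro t _
      refine Measurable.ite ?_ measurable_const measurable_const
      have h1 : Measurable fun a : Y × (Fin (L + 1) → Θ) => f (a.2 t) :=
        hf.comp ((measurable_pi_apply t).comp measurable_snd)
      have h2 : Measurable fun a : Y × (Fin (L + 1) → Θ) => f (a.2 0) :=
        hf.comp ((measurable_pi_apply 0).comp measurable_snd)
      exact measurableSet_lt h1 h2
    exact this (measurableSet_singleton k)
  have hset : {ω | (Finset.univ.filter (fun ℓ : Fin L => f (Ts ℓ ω) < f (T ω))).card = k}
      = G ⁻¹' {p : Y × (Fin (L + 1) → Θ) |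
          (∑ t, if f (p.2 t) < f (p.2 0) then 1 else 0 : ℕ) = k} := by
    ext ω
    simp only [Set.mem_setOf_eq, Set.mem_preimage, hGdef]
    rw [Fin.sum_univ_succ]
    simp only [Fin.cons_zero, Fin.cons_succ, lt_irrefl, if_false, zero_add]
    rw [Finset.card_filter]
  rw [hset, ← Measure.map_apply hG hSmeas, hmapρ]
  have := sbc_uniform (n := L)
    ((μY.prod (Measure.pi fun _ : Fin (L + 1) => μΘ)).withDensity Dens) f hf hperm hdist k hk
  exact this
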